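/- arXiv:math/0210055 — 2 statements merged into one kernel-verified Lean document; each statement's English description precedes it below -/
import Mathlib

section
/- Measure concentration on product spaces with Hamming distance: for any product probability measure P^n on A^n, any C_n ⊆ A^n with P^n(C_n) > 0, and any D ≥ 0, the probability of the complement of the D-blowup satisfies 1 − P^n([C_n]_D) ≤ e^{−nD²/2} / P^n(C_n). -/
open Finset

attribute [local instance] Classical.propDecidable

/-- Normalized Hamming distance on `A^n`. -/
noncomputable def hammingN {A : Type*} (n : ℕ) (x y : Fin n → A) : ℝ :=
  (1 / (n : ℝ)) * ∑ i, (if x i ≠ y i then (1 : ℝ) else 0)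

/-- The `D`-blowup of `C ⊆ A^n` for the normalized Hamming distance. -/
noncomputable def blowup {A : Type*} [Fintype A] (n : ℕ)
    (C : Finset (Fin n → A)) (D : ℝ) : Finset (Fin n → A) :=
  Finset.univ.filter (fun x => ∃ y ∈ C, hammingN n x y ≤ D)

/-- Product probability of a subset of `A^n`. -/
noncomputable def prodProb {A : Type*} [Fintype A] (P : A → ℝ) (n : ℕ)
    (C : Finset (Fin n → A)) : ℝ := ∑ x ∈ C, ∏ i, P (x i)

/-!
Let `g x` be the (unnormalized) Hamming distance from `x` to `C`. Changing one coordinate moves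
`g` by at most one, so applying Hoeffding's lemma one coordinate at a time gives
`E[exp (s g)] ≤ exp (s E[g] + n s² / 8)` for every real `s`. Since `g = 0` on `C` and `g ≥ n D`
off the blowup, Markov's inequality with `s = -2D` and `s = 2D` bounds `P(C)` and
`1 - P([C]_D)` by exponentials whose product no longer involves the unknown `E[g]`: it is
`exp (-n D²) ≤ exp (-n D² / 2)`.
-/

open Real ProbabilityTheory MeasureTheory Function Hamming

lemma sum_mul_exp_le_of_sub_le_one {A : Type*} [Fintype A] {P : A → ℝ}
    (hP : ∀ a, 0 ≤ P a) (hPsum : ∑ a, P a = 1) {φ : A → ℝ}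
    (hφ : ∀ a b, φ a - φ b ≤ 1) (s : ℝ) :
    ∑ a, P a * exp (s * φ a) ≤ exp (s * ∑ a, P a * φ a + s ^ 2 / 8) := by
  let _ : MeasurableSpace A := ⊤
  have : Nonempty A := by
    by_contra h
    simp [not_nonempty_iff.mp h] at hPsum
  have hP' : ∑ a, ENNReal.ofReal (P a) = 1 := by
    rw [← ENNReal.ofReal_sum_of_nonneg fun a _ => hP a, hPsum, ENNReal.ofReal_one]
  set μ := (PMF.ofFintype _ hP').toMeasure
  have hint (f : A → ℝ) : ∫ a, f a ∂μ = ∑ a, P a * f a := by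
    simp [μ, PMF.integral_eq_sum, ENNReal.toReal_ofReal (hP _)]
  obtain ⟨a₀, -, ha₀⟩ := exists_min_image univ φ univ_nonempty
  have hHoeffding := (hasSubgaussianMGF_of_mem_Icc (μ := μ) (X := φ) (a := φ a₀)
    (b := φ a₀ + 1) (measurable_of_finite φ).aemeasurable
    (ae_of_all _ fun a => ⟨ha₀ a (mem_univ a), by linarith [hφ a a₀]⟩)).mgf_le s
  simp only [mgf, hint, add_sub_cancel_left] at hHoeffding
  set m := ∑ a, P a * φ a
  calc ∑ a, P a * exp (s * φ a) = exp (s * m) * ∑ a, P a * exp (s * (φ a - m)) := by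
        rw [mul_sum]; congr! 1 with a; rw [mul_left_comm, ← exp_add]; congr 2; ring
    _ ≤ exp (s * m) * exp (s ^ 2 / 8) := by
        gcongr; refine hHoeffding.trans_eq ?_; congr 1; push_cast; norm_num; ring
    _ = exp (s * m + s ^ 2 / 8) := (exp_add _ _).symm

section ProductExpectation

variable {A : Type*} [Fintype A] {P : A → ℝ} {n : ℕ}

noncomputable def prodExpect (P : A → ℝ) (n : ℕ) (f : (Fin n → A) → ℝ) : ℝ :=
  ∑ x, (∏ i, P (x i)) * f x

lemma prodExpect_succ (f : (Fin (n + 1) → A) → ℝ) :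
    prodExpect P (n + 1) f = ∑ a, P a * prodExpect P n (fun y => f (Fin.cons a y)) := by
  rw [prodExpect, ← (Fin.consEquiv fun _ => A).sum_comp, Fintype.sum_prod_type]
  simp only [prodExpect, mul_sum, Fin.consEquiv_apply, Fin.prod_univ_succ, Fin.cons_zero,
    Fin.cons_succ, mul_assoc]
  rfl

lemma prodExpect_const (hPsum : ∑ a, P a = 1) (c : ℝ) : prodExpect P n (fun _ => c) = c := by
  rw [prodExpect, ← sum_mul, ← Fintype.prod_sum]
  simp [hPsum]

lemma prodExpect_mono (hP : ∀ a, 0 ≤ P a) {f g : (Fin n → A) → ℝ}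
    (hfg : ∀ x, f x ≤ g x) :
    prodExpect P n f ≤ prodExpect P n g :=
  sum_le_sum fun x _ => mul_le_mul_of_nonneg_left (hfg x) (prod_nonneg fun _ _ => hP _)

lemma prodExpect_sub (f g : (Fin n → A) → ℝ) :
    prodExpect P n (fun x => f x - g x) = prodExpect P n f - prodExpect P n g := by
  simp only [prodExpect, mul_sub, sum_sub_distrib]

lemma prodExpect_const_mul (c : ℝ) (f : (Fin n → A) → ℝ) :
    prodExpect P n (fun x => c * f x) = c * prodExpect P n f := by
  simp only [prodExpect, mul_sum, mul_left_comm]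

lemma prodProb_le_prodExpect (hP : ∀ a, 0 ≤ P a) {C : Finset (Fin n → A)}
    {f : (Fin n → A) → ℝ} (hf₀ : ∀ x, 0 ≤ f x) (hf₁ : ∀ x ∈ C, 1 ≤ f x) :
    prodProb P n C ≤ prodExpect P n f := by
  have hw : ∀ x : Fin n → A, 0 ≤ ∏ i, P (x i) := fun x => prod_nonneg fun i _ => hP _
  calc prodProb P n C ≤ ∑ x ∈ C, (∏ i, P (x i)) * f x :=
        sum_le_sum fun x hx => le_mul_of_one_le_right (hw x) (hf₁ x hx)
    _ ≤ prodExpect P n f :=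
        sum_le_sum_of_subset_of_nonneg (subset_univ C) fun x _ _ => mul_nonneg (hw x) (hf₀ x)

lemma prodProb_compl (hPsum : ∑ a, P a = 1) (C : Finset (Fin n → A)) :
    prodProb P n Cᶜ = 1 - prodProb P n C := by
  have h := prodExpect_const (P := P) (n := n) hPsum 1
  simp only [prodExpect, mul_one] at h
  rw [prodProb, prodProb, ← h, ← sum_add_sum_compl C]
  ring

end ProductExpectation

theorem prodExpect_exp_le_of_sub_update_le_one {A : Type*} [Fintype A] {P : A → ℝ}
    (hP : ∀ a, 0 ≤ P a) (hPsum : ∑ a, P a = 1) :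
    ∀ {n : ℕ} {f : (Fin n → A) → ℝ}, (∀ x i a, f x - f (update x i a) ≤ 1) →
      ∀ s : ℝ, prodExpect P n (fun x => exp (s * f x)) ≤
        exp (s * prodExpect P n f + n * s ^ 2 / 8)
  | 0, f, _, s => by
    simp [prodExpect]
  | n + 1, f, hf, s => by
    set m : A → ℝ := fun a => prodExpect P n (fun y => f (Fin.cons a y))
    have hm : ∀ a b, m a - m b ≤ 1 := fun a b => by
      rw [← prodExpect_sub, ← prodExpect_const (P := P) (n := n) hPsum 1]
      refine prodExpect_mono hP fun y => ?_
      simpa only [Fin.update_cons_zero] using hf (Fin.cons a y) 0 b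
    have hslice : ∀ a, prodExpect P n (fun y => exp (s * f (Fin.cons a y))) ≤
        exp (s * m a + n * s ^ 2 / 8) := fun a =>
      prodExpect_exp_le_of_sub_update_le_one hP hPsum
        (fun y i b => by simpa only [Fin.cons_update] using hf (Fin.cons a y) i.succ b) s
    calc prodExpect P (n + 1) (fun x => exp (s * f x))
        ≤ ∑ a, P a * exp (s * m a + n * s ^ 2 / 8) := by
          rw [prodExpect_succ]
          exact sum_le_sum fun a _ => mul_le_mul_of_nonneg_left (hslice a) (hP a)
      _ = exp (n * s ^ 2 / 8) * ∑ a, P a * exp (s * m a) := by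
          simp only [exp_add, mul_sum]; congr! 1; ring
      _ ≤ exp (n * s ^ 2 / 8) * exp (s * ∑ a, P a * m a + s ^ 2 / 8) := by
          gcongr; exact sum_mul_exp_le_of_sub_le_one hP hPsum hm s
      _ = exp (s * prodExpect P (n + 1) f + (n + 1 : ℕ) * s ^ 2 / 8) := by
          rw [← exp_add, prodExpect_succ]; simp only [m]; push_cast; congr 1; ring

section HammingDistanceToSet

variable {A : Type*} {n : ℕ}

lemma dist_toHamming (x y : Fin n → A) :
    dist (toHamming x) (toHamming y) = hammingDist x y := by
  rw [Hamming.dist_eq_hammingDist, ofHamming_toHamming, ofHamming_toHamming]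

lemma hammingDist_update_le_one (x : Fin n → A) (i : Fin n) (a : A) :
    hammingDist x (update x i a) ≤ 1 := by
  refine (card_le_card fun j hj => mem_singleton.mpr ?_).trans (card_singleton i).le
  by_contra hji
  simp [update_of_ne hji] at hj

lemma natCast_mul_hammingN_le (x y : Fin n → A) : n * hammingN n x y ≤ hammingDist x y := by
  rcases eq_or_ne n 0 with rfl | hn
  · simp [hammingN]
  · rw [hammingN, ← mul_assoc, mul_one_div_cancel (Nat.cast_ne_zero.mpr hn), one_mul,
      hammingDist, sum_boole]

noncomputable def hammingInfDist (C : Finset (Fin n → A)) (x : Fin n → A) : ℝ :=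
  Metric.infDist (toHamming x) (toHamming '' (C : Set (Fin n → A)))

variable {C : Finset (Fin n → A)}

lemma hammingInfDist_eq_zero_of_mem {x : Fin n → A} (hx : x ∈ C) : hammingInfDist C x = 0 :=
  Metric.infDist_zero_of_mem ⟨x, hx, rfl⟩

lemma hammingInfDist_sub_update_le_one (x : Fin n → A) (i : Fin n) (a : A) :
    hammingInfDist C x - hammingInfDist C (update x i a) ≤ 1 := by
  have hupdate : (hammingDist x (update x i a) : ℝ) ≤ 1 :=
    mod_cast hammingDist_update_le_one x i a
  unfold hammingInfDist
  linarith [Metric.infDist_le_infDist_add_dist (s := toHamming '' (C : Set (Fin n → A)))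
    (x := toHamming x) (y := toHamming (update x i a)), dist_toHamming x (update x i a)]

variable [Fintype A]

lemma natCast_mul_le_hammingInfDist_of_notMem_blowup (hC : C.Nonempty) {D : ℝ} {x : Fin n → A}
    (hx : x ∉ blowup n C D) : n * D ≤ hammingInfDist C x := by
  refine not_lt.mp fun hlt => ?_
  obtain ⟨_, ⟨y, hy, rfl⟩, hxy⟩ :=
    (Metric.infDist_lt_iff ((coe_nonempty.mpr hC).image _)).mp hlt
  have hD : D < hammingN n x y :=
    not_le.mp fun hle => hx (by simpa [blowup] using ⟨y, hy, hle⟩)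
  linarith [dist_toHamming x y, natCast_mul_hammingN_le x y,
    mul_le_mul_of_nonneg_left hD.le (Nat.cast_nonneg n)]

end HammingDistanceToSet

theorem stmt_5_general {A : Type*} [Fintype A]
    (P : A → ℝ) (hP : ∀ a, 0 ≤ P a) (hPsum : ∑ a, P a = 1)
    (n : ℕ) (C : Finset (Fin n → A))
    (hC : 0 < prodProb P n C) (D : ℝ) (hD : 0 ≤ D) :
    1 - prodProb P n (blowup n C D) ≤
      Real.exp (-(n : ℝ) * D ^ 2 / 2) / prodProb P n C := by
  have hCne : C.Nonempty := nonempty_of_sum_ne_zero hC.ne'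
  set g := hammingInfDist C
  set μ := prodExpect P n g
  have hmgf (s : ℝ) : prodExpect P n (fun x => exp (s * g x)) ≤ exp (s * μ + n * s ^ 2 / 8) :=
    prodExpect_exp_le_of_sub_update_le_one hP hPsum hammingInfDist_sub_update_le_one s
  have hinside : prodProb P n C ≤ exp (-(2 * D) * μ + n * (-(2 * D)) ^ 2 / 8) := by
    refine le_trans (prodProb_le_prodExpect hP (f := fun x => exp (-(2 * D) * g x))
      (fun x => (exp_pos _).le) fun x hx => ?_) (hmgf _)
    rw [show g x = 0 from hammingInfDist_eq_zero_of_mem hx, mul_zero, exp_zero]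
  have houtside : prodProb P n (blowup n C D)ᶜ ≤
      exp (-(2 * D * (n * D))) * exp (2 * D * μ + n * (2 * D) ^ 2 / 8) := by
    refine le_trans (prodProb_le_prodExpect hP
      (f := fun x => exp (-(2 * D * (n * D))) * exp (2 * D * g x))
      (fun x => (mul_pos (exp_pos _) (exp_pos _)).le) fun x hx => ?_) ?_
    · have := natCast_mul_le_hammingInfDist_of_notMem_blowup hCne (mem_compl.mp hx)
      rw [← exp_add]
      exact one_le_exp (by nlinarith)
    · rw [prodExpect_const_mul]
      exact mul_le_mul_of_nonneg_left (hmgf _) (exp_pos _).le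
  rw [← prodProb_compl hPsum, le_div_iff₀ hC]
  calc prodProb P n (blowup n C D)ᶜ * prodProb P n C
      ≤ exp (-(2 * D * (n * D))) * exp (2 * D * μ + n * (2 * D) ^ 2 / 8) *
          exp (-(2 * D) * μ + n * (-(2 * D)) ^ 2 / 8) :=
        mul_le_mul houtside hinside hC.le (by positivity)
    _ = exp (-n * D ^ 2) := by simp only [← exp_add]; ring_nf
    _ ≤ exp (-n * D ^ 2 / 2) := exp_le_exp.mpr (by nlinarith [sq_nonneg D])

theorem stmt_5 {A : Type*} [Fintype A] [Nonempty A]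
    (P : A → ℝ) (hP : ∀ a, 0 ≤ P a) (hPsum : ∑ a, P a = 1)
    (n : ℕ) (hn : 0 < n) (C : Finset (Fin n → A))
    (hC : 0 < prodProb P n C) (D : ℝ) (hD : 0 ≤ D) :
    1 - prodProb P n (blowup n C D) ≤
      Real.exp (-(n : ℝ) * D ^ 2 / 2) / prodProb P n C :=
  stmt_5_general P hP hPsum n C hC D hD
end

section
/- The rate-function R(D;P,M) is (jointly) continuous in D on [0, D_max) and in P (with respect to the total-variation or any equivalent topology on distributions with full support), where D_max = max_{x,y} ρ(x,y); in particular for fixed full-support P, the map D ↦ R(D;P,M) is continuous on [0, D_max). -/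
open Finset

/-- Real-valued rate-function `R(D;P,M)`. -/
noncomputable def rateR {A : Type*} [Fintype A] (ρ : A → A → ℝ)
    (P M : A → ℝ) (D : ℝ) : ℝ :=
  sInf { x : ℝ | ∃ W : A × A → ℝ,
    (∀ p, 0 ≤ W p) ∧
    (∀ a, (∑ b, W (a, b)) = P a) ∧
    (∑ p : A × A, W p * ρ p.1 p.2) ≤ D ∧
    x = (∑ p : A × A,
          W p * Real.logb 2 (W p / (P p.1 * ∑ a, W (a, p.2)))) +
        ∑ p : A × A, W p * Real.logb 2 (M p.2) }

section Aux

variable {A : Type*} [Fintype A]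

/-- Feasible set of couplings. -/
def Kset (ρ : A → A → ℝ) (P : A → ℝ) (D : ℝ) : Set (A × A → ℝ) :=
  {W | (∀ p, 0 ≤ W p) ∧ (∀ a, (∑ b, W (a, b)) = P a) ∧
    (∑ p : A × A, W p * ρ p.1 p.2) ≤ D}

/-- Smooth form of the objective. -/
noncomputable def fObj (P M : A → ℝ) (W : A × A → ℝ) : ℝ :=
  ((∑ p : A × A, W p * Real.log (W p))
   - (∑ p : A × A, W p * Real.log (P p.1))
   - ∑ b : A, (∑ a, W (a, b)) * Real.log (∑ a, W (a, b))) / Real.log 2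
  + ∑ p : A × A, W p * Real.logb 2 (M p.2)

lemma objEq (P M : A → ℝ) (hP : ∀ a, 0 < P a) (W : A × A → ℝ) (hW : ∀ p, 0 ≤ W p) :
    (∑ p : A × A, W p * Real.logb 2 (W p / (P p.1 * ∑ a, W (a, p.2)))) +
      ∑ p : A × A, W p * Real.logb 2 (M p.2) = fObj P M W := by
  unfold fObj
  congr 1
  have hZ : ∑ b : A, (∑ a, W (a, b)) * Real.log (∑ a, W (a, b))
      = ∑ p : A × A, W p * Real.log (∑ a, W (a, p.2)) := by
    rw [Fintype.sum_prod_type_right]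
    refine Finset.sum_congr rfl fun b _ => ?_
    rw [Finset.sum_mul]
  rw [hZ, ← Finset.sum_sub_distrib, ← Finset.sum_sub_distrib, Finset.sum_div]
  refine Finset.sum_congr rfl fun p _ => ?_
  rcases eq_or_lt_of_le (hW p) with h0 | h0
  · simp [← h0]
  · have hS : 0 < ∑ a, W (a, p.2) := by
      refine lt_of_lt_of_le h0 ?_
      have := Finset.single_le_sum (f := fun a => W (a, p.2))
        (fun a _ => hW _) (Finset.mem_univ p.1)
      simpa using this
    rw [Real.logb, Real.log_div (ne_of_gt h0) (ne_of_gt (mul_pos (hP p.1) hS)),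
      Real.log_mul (ne_of_gt (hP p.1)) (ne_of_gt hS)]
    ring

lemma Kset_isCompact (ρ : A → A → ℝ) (P : A → ℝ) (D : ℝ) : IsCompact (Kset ρ P D) := by
  have hsub : Kset ρ P D ⊆ Set.pi Set.univ (fun _ : A × A => Set.Icc (0:ℝ) (∑ a, P a)) := by
    rintro W ⟨h1, h2, _⟩ p _
    refine ⟨h1 p, ?_⟩
    have hWP : W p ≤ P p.1 := by
      rw [← h2 p.1]
      have := Finset.single_le_sum (f := fun b => W (p.1, b))
        (fun b _ => h1 _) (Finset.mem_univ p.2)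
      simpa using this
    have hPs : P p.1 ≤ ∑ a, P a := by
      refine Finset.single_le_sum (fun a _ => ?_) (Finset.mem_univ p.1)
      rw [← h2 a]
      exact Finset.sum_nonneg fun b _ => h1 _
    exact hWP.trans hPs
  refine IsCompact.of_isClosed_subset (isCompact_univ_pi fun _ => isCompact_Icc) ?_ hsub
  have e1 : IsClosed {W : A × A → ℝ | ∀ p, 0 ≤ W p} := by
    have : {W : A × A → ℝ | ∀ p, 0 ≤ W p} = ⋂ p, {W | 0 ≤ W p} := by
      ext W; simp [Set.mem_iInter]
    rw [this]
    exact isClosed_iInter fun p => isClosed_le continuous_const (continuous_apply p)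
  have e2 : IsClosed {W : A × A → ℝ | ∀ a, (∑ b, W (a, b)) = P a} := by
    have : {W : A × A → ℝ | ∀ a, (∑ b, W (a, b)) = P a}
        = ⋂ a, {W | (∑ b, W (a, b)) = P a} := by
      ext W; simp [Set.mem_iInter]
    rw [this]
    exact isClosed_iInter fun a => isClosed_eq
      (continuous_finset_sum _ fun b _ => continuous_apply (a, b)) continuous_const
  have e3 : IsClosed {W : A × A → ℝ | (∑ p : A × A, W p * ρ p.1 p.2) ≤ D} :=
    isClosed_le (continuous_finset_sum _ fun p _ => (continuous_apply p).mul continuous_const)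
      continuous_const
  have : Kset ρ P D = {W : A × A → ℝ | ∀ p, 0 ≤ W p}
      ∩ ({W | ∀ a, (∑ b, W (a, b)) = P a} ∩ {W | (∑ p : A × A, W p * ρ p.1 p.2) ≤ D}) := by
    ext W; simp [Kset, Set.mem_setOf_eq, and_assoc]
  rw [this]
  exact e1.inter (e2.inter e3)

lemma Kset_nonempty (ρ : A → A → ℝ) (hzero : ∀ a, ∃ b, ρ a b = 0) (P : A → ℝ)
    (hP : ∀ a, 0 ≤ P a) (D : ℝ) (hD : 0 ≤ D) : (Kset ρ P D).Nonempty := by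
  classical
  refine ⟨fun p => if p.2 = (hzero p.1).choose then P p.1 else 0, fun p => ?_, fun a => ?_, ?_⟩
  · dsimp only; split <;> simp [hP _]
  · show (∑ b : A, if b = (hzero a).choose then P a else 0) = P a
    rw [Finset.sum_ite_eq' Finset.univ _ (fun _ => P a)]
    simp
  · have : ∀ a : A, ∀ b : A, (if b = (hzero a).choose then P a else 0) * ρ a b
        = if b = (hzero a).choose then P a * ρ a b else 0 := by
      intro a b; split <;> simp
    rw [Fintype.sum_prod_type]
    calc (∑ a : A, ∑ b : A, (if b = (hzero a).choose then P a else 0) * ρ a b)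
        = ∑ a : A, P a * ρ a (hzero a).choose := by
          refine Finset.sum_congr rfl fun a _ => ?_
          simp only [this]
          simp
      _ = 0 := by
          refine Finset.sum_eq_zero fun a _ => ?_
          rw [(hzero a).choose_spec, mul_zero]
      _ ≤ D := hD


lemma fObj_continuous (P M : A → ℝ) : Continuous (fObj P M) := by
  unfold fObj
  refine Continuous.add (Continuous.div_const (Continuous.sub (Continuous.sub ?_ ?_) ?_) _) ?_
  · exact continuous_finset_sum _ fun p _ =>
      Real.continuous_mul_log.comp (continuous_apply p)
  · exact continuous_finset_sum _ fun p _ => (continuous_apply p).mul continuous_const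
  · exact continuous_finset_sum _ fun b _ =>
      Real.continuous_mul_log.comp (continuous_finset_sum _ fun a _ => continuous_apply (a, b))
  · exact continuous_finset_sum _ fun p _ => (continuous_apply p).mul continuous_const

lemma fObj_tendsto (M : A → ℝ) {P : ℕ → A → ℝ} {P₀ : A → ℝ} {W : ℕ → A × A → ℝ}
    {W₀ : A × A → ℝ} (hP₀ : ∀ a, 0 < P₀ a)
    (hPt : ∀ a, Filter.Tendsto (fun n => P n a) Filter.atTop (nhds (P₀ a)))
    (hWt : ∀ p, Filter.Tendsto (fun n => W n p) Filter.atTop (nhds (W₀ p))) :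
    Filter.Tendsto (fun n => fObj (P n) M (W n)) Filter.atTop (nhds (fObj P₀ M W₀)) := by
  unfold fObj
  refine Filter.Tendsto.add
    (Filter.Tendsto.div_const (Filter.Tendsto.sub (Filter.Tendsto.sub ?_ ?_) ?_) _) ?_
  · exact tendsto_finset_sum _ fun p _ =>
      (Real.continuous_mul_log.tendsto _).comp (hWt p)
  · exact tendsto_finset_sum _ fun p _ => (hWt p).mul
      (((Real.continuousAt_log (ne_of_gt (hP₀ p.1))).tendsto).comp (hPt p.1))
  · exact tendsto_finset_sum _ fun b _ =>
      (Real.continuous_mul_log.tendsto _).comp (tendsto_finset_sum _ fun a _ => hWt (a, b))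
  · exact tendsto_finset_sum _ fun p _ => (hWt p).mul_const _


lemma rateR_spec (ρ : A → A → ℝ) (hzero : ∀ a, ∃ b, ρ a b = 0) (M P : A → ℝ)
    (hP : ∀ a, 0 < P a) (D : ℝ) (hD : 0 ≤ D) :
    rateR ρ P M D ∈ fObj P M '' Kset ρ P D ∧
      ∀ W ∈ Kset ρ P D, rateR ρ P M D ≤ fObj P M W := by
  have hset : { x : ℝ | ∃ W : A × A → ℝ,
      (∀ p, 0 ≤ W p) ∧
      (∀ a, (∑ b, W (a, b)) = P a) ∧
      (∑ p : A × A, W p * ρ p.1 p.2) ≤ D ∧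
      x = (∑ p : A × A,
            W p * Real.logb 2 (W p / (P p.1 * ∑ a, W (a, p.2)))) +
          ∑ p : A × A, W p * Real.logb 2 (M p.2) } = fObj P M '' Kset ρ P D := by
    ext x
    constructor
    · rintro ⟨W, h1, h2, h3, h4⟩
      exact ⟨W, ⟨h1, h2, h3⟩, by rw [← objEq P M hP W h1, ← h4]⟩
    · rintro ⟨W, ⟨h1, h2, h3⟩, h4⟩
      exact ⟨W, h1, h2, h3, by rw [← h4, ← objEq P M hP W h1]⟩
  have hcpt : IsCompact (fObj P M '' Kset ρ P D) :=
    (Kset_isCompact ρ P D).image (fObj_continuous P M)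
  have hne : (fObj P M '' Kset ρ P D).Nonempty :=
    (Kset_nonempty ρ hzero P (fun a => (hP a).le) D hD).image _
  have hmem : rateR ρ P M D ∈ fObj P M '' Kset ρ P D := by
    rw [rateR, hset]
    exact hcpt.isClosed.csInf_mem hne hcpt.bddBelow
  refine ⟨hmem, fun W hW => ?_⟩
  rw [rateR, hset]
  exact csInf_le hcpt.bddBelow ⟨W, hW, rfl⟩

end Aux
/-- Joint continuity of `(P,D) ↦ R(D;P,M)` on full-support distributions `P`
and `D ∈ [0, D_max)`. -/
theorem stmt_10 {A : Type*} [Fintype A] [Nonempty A]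
    (ρ : A → A → ℝ) (hρ : ∀ a b, 0 ≤ ρ a b)
    (hzero : ∀ a, ∃ b, ρ a b = 0)
    (M : A → ℝ) (hM : ∀ a, 0 < M a) :
    ContinuousOn (fun q : (A → ℝ) × ℝ => rateR ρ q.1 M q.2)
      { q : (A → ℝ) × ℝ | (∀ a, 0 < q.1 a) ∧ (∑ a, q.1 a = 1) ∧
        q.2 ∈ Set.Ico (0 : ℝ) (⨆ p : A × A, ρ p.1 p.2) } := by
  classical
  set Ω : Set ((A → ℝ) × ℝ) := { q | (∀ a, 0 < q.1 a) ∧ (∑ a, q.1 a = 1) ∧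
      q.2 ∈ Set.Ico (0 : ℝ) (⨆ p : A × A, ρ p.1 p.2) } with hΩ
  intro q₀ hq₀
  have hP₀ : ∀ a, 0 < q₀.1 a := hq₀.1
  have hD₀0 : 0 ≤ q₀.2 := hq₀.2.2.1
  rw [ContinuousWithinAt, Filter.tendsto_iff_seq_tendsto]
  intro u hu
  simp only [Function.comp_def]
  have huΩ : ∀ᶠ n in Filter.atTop, u n ∈ Ω := hu self_mem_nhdsWithin
  have hu' : Filter.Tendsto u Filter.atTop (nhds q₀) := hu.mono_right nhdsWithin_le_nhds
  have hPt : ∀ a, Filter.Tendsto (fun n => (u n).1 a) Filter.atTop (nhds (q₀.1 a)) :=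
    fun a => (((continuous_apply a).comp continuous_fst).continuousAt).tendsto.comp hu'
  have hDt : Filter.Tendsto (fun n => (u n).2) Filter.atTop (nhds q₀.2) :=
    (continuous_snd.continuousAt).tendsto.comp hu'
  obtain ⟨⟨W, hWK, hWeq⟩, hWmin⟩ := rateR_spec ρ hzero M q₀.1 hP₀ q₀.2 hD₀0
  rw [tendsto_order]
  constructor
  · -- lower semicontinuity
    intro z hz
    by_contra hcon
    rw [Filter.not_eventually] at hcon
    have hfreq : ∃ᶠ n in Filter.atTop,
        (rateR ρ (u n).1 M (u n).2 ≤ z ∧ u n ∈ Ω) := by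
      refine (hcon.and_eventually huΩ).mono ?_
      rintro n ⟨h1, h2⟩
      exact ⟨not_lt.1 h1, h2⟩
    obtain ⟨φ, hφ, hPφ⟩ := Filter.extraction_of_frequently_atTop hfreq
    have hspec := fun n => rateR_spec ρ hzero M (u (φ n)).1 (hPφ n).2.1 (u (φ n)).2
      (hPφ n).2.2.2.1
    choose V hVK hVeq using fun n => (hspec n).1
    have hbox : ∀ n, V n ∈ Set.pi Set.univ (fun _ : A × A => Set.Icc (0:ℝ) 1) := by
      intro n p _
      obtain ⟨h1, h2, _⟩ := hVK n
      refine ⟨h1 p, ?_⟩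
      have hWP : V n p ≤ (u (φ n)).1 p.1 := by
        rw [← h2 p.1]
        have := Finset.single_le_sum (f := fun b => V n (p.1, b)) (fun b _ => h1 _)
          (Finset.mem_univ p.2)
        simpa using this
      have hle1 : (u (φ n)).1 p.1 ≤ 1 := by
        rw [← (hPφ n).2.2.1]
        exact Finset.single_le_sum (fun a _ => ((hPφ n).2.1 a).le) (Finset.mem_univ p.1)
      exact hWP.trans hle1
    obtain ⟨W₀, -, ψ, hψ, hψt⟩ :=
      (isCompact_univ_pi (fun _ : A × A => isCompact_Icc (a := (0:ℝ)) (b := 1))).tendsto_subseq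
        hbox
    have hmono : StrictMono (φ ∘ ψ) := hφ.comp hψ
    have hVt : ∀ p, Filter.Tendsto (fun k => V (ψ k) p) Filter.atTop (nhds (W₀ p)) :=
      fun p => tendsto_pi_nhds.1 hψt p
    have huc : Filter.Tendsto (fun k => u (φ (ψ k))) Filter.atTop (nhds q₀) :=
      hu'.comp hmono.tendsto_atTop
    have hPct : ∀ a, Filter.Tendsto (fun k => (u (φ (ψ k))).1 a) Filter.atTop (nhds (q₀.1 a)) :=
      fun a => (((continuous_apply a).comp continuous_fst).continuousAt).tendsto.comp huc
    have hDct : Filter.Tendsto (fun k => (u (φ (ψ k))).2) Filter.atTop (nhds q₀.2) :=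
      (continuous_snd.continuousAt).tendsto.comp huc
    have hW₀K : W₀ ∈ Kset ρ q₀.1 q₀.2 := by
      refine ⟨fun p => ?_, fun a => ?_, ?_⟩
      · exact ge_of_tendsto (hVt p) (Filter.Eventually.of_forall fun k => (hVK (ψ k)).1 p)
      · refine tendsto_nhds_unique (tendsto_finset_sum _ fun b _ => hVt (a, b)) ?_
        exact (hPct a).congr fun k => ((hVK (ψ k)).2.1 a).symm
      · exact le_of_tendsto_of_tendsto'
          (tendsto_finset_sum _ fun p _ => (hVt p).mul_const _) hDct
          (fun k => (hVK (ψ k)).2.2)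
    have hlim : Filter.Tendsto (fun k => fObj (u (φ (ψ k))).1 M (V (ψ k)))
        Filter.atTop (nhds (fObj q₀.1 M W₀)) := fObj_tendsto M hP₀ hPct hVt
    have hle : fObj q₀.1 M W₀ ≤ z :=
      le_of_tendsto hlim (Filter.Eventually.of_forall fun k => by
        rw [hVeq (ψ k)]; exact (hPφ (ψ k)).1)
    have := hWmin W₀ hW₀K
    linarith
  · -- upper semicontinuity
    intro z hz
    set c : A → A := fun a => (hzero a).choose with hc
    have hcρ : ∀ a, ρ a (c a) = 0 := fun a => (hzero a).choose_spec
    set d : ℕ → ℝ := fun n => ∑ p : A × A, W p * ((u n).1 p.1 / q₀.1 p.1) * ρ p.1 p.2 with hd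
    set d₀ : ℝ := ∑ p : A × A, W p * ρ p.1 p.2 with hd₀
    have hd₀D : d₀ ≤ q₀.2 := hWK.2.2
    have hdt : Filter.Tendsto d Filter.atTop (nhds d₀) := by
      have h1 : Filter.Tendsto d Filter.atTop
          (nhds (∑ p : A × A, W p * (q₀.1 p.1 / q₀.1 p.1) * ρ p.1 p.2)) :=
        tendsto_finset_sum _ fun p _ =>
          (tendsto_const_nhds.mul ((hPt p.1).div_const _)).mul_const _
      have he : (∑ p : A × A, W p * (q₀.1 p.1 / q₀.1 p.1) * ρ p.1 p.2) = d₀ :=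
        Finset.sum_congr rfl fun p _ => by rw [div_self (ne_of_gt (hP₀ p.1)), mul_one]
      rwa [he] at h1
    set t : ℕ → ℝ := fun n => if d n ≤ (u n).2 then 0 else 1 - (u n).2 / d n with ht
    have ht0 : ∀ n, u n ∈ Ω → 0 ≤ t n := by
      intro n hn
      simp only [ht]
      split
      · exact le_refl _
      · rename_i hcase
        have hlt : (u n).2 < d n := not_le.1 hcase
        have hd0 : 0 < d n := lt_of_le_of_lt hn.2.2.1 hlt
        have : (u n).2 / d n < 1 := (div_lt_one hd0).2 hlt
        linarith
    set W' : ℕ → A × A → ℝ := fun n p =>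
      (1 - t n) * (W p * ((u n).1 p.1 / q₀.1 p.1))
        + t n * ((u n).1 p.1 * (if p.2 = c p.1 then 1 else 0)) with hW'
    have htt : Filter.Tendsto t Filter.atTop (nhds 0) := by
      have hd₀0 : 0 ≤ d₀ := Finset.sum_nonneg fun p _ => mul_nonneg (hWK.1 p) (hρ _ _)
      rcases eq_or_lt_of_le hd₀0 with h0 | h0
      · have hterm : ∀ p ∈ Finset.univ (α := A × A), W p * ρ p.1 p.2 = 0 :=
          (Finset.sum_eq_zero_iff_of_nonneg
            (fun p _ => mul_nonneg (hWK.1 p) (hρ _ _))).1 h0.symm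
        have hdz : ∀ n, d n = 0 := by
          intro n
          refine Finset.sum_eq_zero fun p _ => ?_
          have he : W p * ((u n).1 p.1 / q₀.1 p.1) * ρ p.1 p.2
              = (W p * ρ p.1 p.2) * ((u n).1 p.1 / q₀.1 p.1) := by ring
          rw [he, hterm p (Finset.mem_univ p), zero_mul]
        refine Filter.Tendsto.congr' ?_ (tendsto_const_nhds (x := (0:ℝ)))
        filter_upwards [huΩ] with n hn
        have hcond : d n ≤ (u n).2 := by rw [hdz n]; exact hn.2.2.1
        simp only [ht, if_pos hcond]
      · have hg : Filter.Tendsto (fun n => max 0 (1 - (u n).2 / d n)) Filter.atTop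
            (nhds (max 0 (1 - q₀.2 / d₀))) :=
          tendsto_const_nhds.max (tendsto_const_nhds.sub (hDt.div hdt (ne_of_gt h0)))
        have hmax0 : max (0:ℝ) (1 - q₀.2 / d₀) = 0 := by
          refine max_eq_left ?_
          have : (1:ℝ) ≤ q₀.2 / d₀ := (one_le_div h0).2 hd₀D
          linarith
        rw [hmax0] at hg
        refine tendsto_of_tendsto_of_tendsto_of_le_of_le' tendsto_const_nhds hg ?_ ?_
        · filter_upwards [huΩ] with n hn
          exact ht0 n hn
        · refine Filter.Eventually.of_forall fun n => ?_
          simp only [ht]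
          split
          · exact le_max_left _ _
          · exact le_max_right _ _
    have hW'K : ∀ n, u n ∈ Ω → W' n ∈ Kset ρ (u n).1 (u n).2 := by
      intro n hn
      have ht0n := ht0 n hn
      have ht1n : t n ≤ 1 := by
        simp only [ht]
        split
        · norm_num
        · rename_i hcase
          have hlt : (u n).2 < d n := not_le.1 hcase
          have hd0 : 0 < d n := lt_of_le_of_lt hn.2.2.1 hlt
          have : 0 ≤ (u n).2 / d n := div_nonneg hn.2.2.1 hd0.le
          linarith
      refine ⟨fun p => ?_, fun a => ?_, ?_⟩
      · have h1 : 0 ≤ W p * ((u n).1 p.1 / q₀.1 p.1) :=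
          mul_nonneg (hWK.1 p) (div_nonneg (hn.1 p.1).le (hP₀ p.1).le)
        have h2 : 0 ≤ (u n).1 p.1 * (if p.2 = c p.1 then (1:ℝ) else 0) :=
          mul_nonneg (hn.1 p.1).le (by split <;> norm_num)
        simp only [hW']
        exact add_nonneg (mul_nonneg (by linarith) h1) (mul_nonneg ht0n h2)
      · simp only [hW']
        rw [Finset.sum_add_distrib, ← Finset.mul_sum, ← Finset.mul_sum,
          show (∑ b, W (a, b) * ((u n).1 a / q₀.1 a))
            = (∑ b, W (a, b)) * ((u n).1 a / q₀.1 a) from (Finset.sum_mul _ _ _).symm,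
          hWK.2.1 a, ← Finset.mul_sum,
          show (∑ b, if b = c a then (1:ℝ) else 0) = 1 by
            rw [Finset.sum_ite_eq' Finset.univ _ (fun _ => (1:ℝ))]; simp]
        have he : q₀.1 a * ((u n).1 a / q₀.1 a) = (u n).1 a := by
          rw [mul_comm, div_mul_cancel₀ _ (ne_of_gt (hP₀ a))]
        rw [mul_one]
        calc (1 - t n) * (q₀.1 a * ((u n).1 a / q₀.1 a)) + t n * (u n).1 a
            = (1 - t n) * (u n).1 a + t n * (u n).1 a := by rw [he]
          _ = (u n).1 a := by ring
      · simp only [hW']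
        have hsplit : (∑ p : A × A, ((1 - t n) * (W p * ((u n).1 p.1 / q₀.1 p.1))
              + t n * ((u n).1 p.1 * (if p.2 = c p.1 then (1:ℝ) else 0))) * ρ p.1 p.2)
            = (1 - t n) * d n
              + t n * (∑ p : A × A,
                  (u n).1 p.1 * (if p.2 = c p.1 then (1:ℝ) else 0) * ρ p.1 p.2) := by
          simp only [hd, Finset.mul_sum, ← Finset.sum_add_distrib]
          exact Finset.sum_congr rfl fun p _ => by ring
        rw [hsplit]
        have hz2 : (∑ p : A × A,
            (u n).1 p.1 * (if p.2 = c p.1 then (1:ℝ) else 0) * ρ p.1 p.2) = 0 := by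
          rw [Fintype.sum_prod_type]
          refine Finset.sum_eq_zero fun a _ => ?_
          have he : ∀ b, (u n).1 a * (if b = c a then (1:ℝ) else 0) * ρ a b
              = if b = c a then (u n).1 a * ρ a b else 0 := by
            intro b; split <;> simp
          rw [Finset.sum_congr rfl fun b _ => he b,
            Finset.sum_ite_eq' Finset.univ (c a) (fun b => (u n).1 a * ρ a b)]
          simp [hcρ a]
        rw [hz2, mul_zero, add_zero]
        by_cases hcase : d n ≤ (u n).2
        · have htn : t n = 0 := by simp only [ht, if_pos hcase]
          rw [htn]
          simpa using hcase
        · have hdn : 0 < d n := lt_of_le_of_lt hn.2.2.1 (not_le.1 hcase)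
          have htn : t n = 1 - (u n).2 / d n := by simp only [ht, if_neg hcase]
          rw [htn]
          have he : (1 - (1 - (u n).2 / d n)) = (u n).2 / d n := by ring
          rw [he, div_mul_cancel₀ _ (ne_of_gt hdn)]
    have hW't : ∀ p, Filter.Tendsto (fun n => W' n p) Filter.atTop (nhds (W p)) := by
      intro p
      have h1 : Filter.Tendsto (fun n => (1 - t n) * (W p * ((u n).1 p.1 / q₀.1 p.1)))
          Filter.atTop (nhds ((1 - 0) * (W p * (q₀.1 p.1 / q₀.1 p.1)))) :=
        (tendsto_const_nhds.sub htt).mul (tendsto_const_nhds.mul ((hPt p.1).div_const _))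
      have h2 : Filter.Tendsto
          (fun n => t n * ((u n).1 p.1 * (if p.2 = c p.1 then (1:ℝ) else 0)))
          Filter.atTop (nhds (0 * (q₀.1 p.1 * (if p.2 = c p.1 then (1:ℝ) else 0)))) :=
        htt.mul ((hPt p.1).mul_const _)
      have h3 := h1.add h2
      simp only [hW']
      simpa [div_self (ne_of_gt (hP₀ p.1))] using h3
    have hflim : Filter.Tendsto (fun n => fObj (u n).1 M (W' n)) Filter.atTop
        (nhds (fObj q₀.1 M W)) := fObj_tendsto M hP₀ hPt hW't
    have hz' : fObj q₀.1 M W < z := by rw [hWeq]; exact hz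
    have hev : ∀ᶠ n in Filter.atTop, fObj (u n).1 M (W' n) < z :=
      hflim (Iio_mem_nhds hz')
    filter_upwards [hev, huΩ] with n h1 h2
    calc rateR ρ (u n).1 M (u n).2 ≤ fObj (u n).1 M (W' n) :=
          (rateR_spec ρ hzero M (u n).1 h2.1 (u n).2 h2.2.2.1).2 _ (hW'K n h2)
      _ < z := h1
end
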